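/- arXiv:2301.10457 — 5 statements merged into one kernel-verified Lean document; each statement's English description precedes it below -/
import Mathlib

section
/- On an infinite dihedral Coxeter system with simple roots β and γ, there are exactly two reflection orders on the set of positive roots, namely β ≺ s_β(γ) ≺ s_β s_γ(β) ≺ ⋯ ≺ s_γ s_β(γ) ≺ s_γ(β) ≺ γ and its reverse γ ≺ s_γ(β) ≺ ⋯ ≺ s_β(γ) ≺ β. In particular each has order type ω + ω*. -/
/-!
Write `βₙ = (n+1)β + nγ` and `γₙ = nβ + (n+1)γ`. For `m < n` both `βₙ` and `γₙ` are positive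
combinations of `βₘ` and `γₘ`, and `βₘ₊₁` is a positive combination of `βₘ` and `γₘ₊₁`.
So once a reflection order puts `β ≺ γ`, induction on `m` gives `βₘ ≺ γₘ` for all `m`, and then
convexity places every root exactly as in `β₀ ≺ β₁ ≺ ⋯ ≺ γ₁ ≺ γ₀`. If instead `γ ≺ β`, apply this
to the reversed relation, which is again a reflection order.
-/
/-- The positive roots of the infinite dihedral group, realized in `ℝ²` with
simple roots `β = (1,0)` and `γ = (0,1)`: they are `(n+1)β + nγ` and `nβ + (n+1)γ`
for `n ≥ 0`. -/
def DihPos : Set (ℝ × ℝ) :=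
  {v | ∃ n : ℕ, v = ((n : ℝ) + 1, (n : ℝ)) ∨ v = ((n : ℝ), (n : ℝ) + 1)}

/-- The explicit total order
`β ≺ s_β(γ) ≺ s_β s_γ(β) ≺ ⋯ ≺ s_γ s_β(γ) ≺ s_γ(β) ≺ γ`, i.e.
`(1,0) ≺ (2,1) ≺ (3,2) ≺ ⋯ ≺ (2,3) ≺ (1,2) ≺ (0,1)`. -/
def DihOrd1 (x y : ℝ × ℝ) : Prop :=
  ∃ m n : ℕ,
    (x = ((m : ℝ) + 1, (m : ℝ)) ∧ y = ((n : ℝ) + 1, (n : ℝ)) ∧ m < n) ∨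
    (x = ((m : ℝ) + 1, (m : ℝ)) ∧ y = ((n : ℝ), (n : ℝ) + 1)) ∨
    (x = ((m : ℝ), (m : ℝ) + 1) ∧ y = ((n : ℝ), (n : ℝ) + 1) ∧ n < m)

structure IsReflectionOrder {V : Type*} [AddCommMonoid V] [Module ℝ V]
    (Φ : Set V) (r : V → V → Prop) : Prop where
  irrefl : ∀ x ∈ Φ, ¬ r x x
  trans : ∀ x ∈ Φ, ∀ y ∈ Φ, ∀ z ∈ Φ, r x y → r y z → r x z
  total : ∀ x ∈ Φ, ∀ y ∈ Φ, x ≠ y → r x y ∨ r y x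
  convex : ∀ x ∈ Φ, ∀ y ∈ Φ, r x y → ∀ k₁ k₂ : ℝ, 0 < k₁ → 0 < k₂ → k₁ • x + k₂ • y ∈ Φ →
    r x (k₁ • x + k₂ • y) ∧ r (k₁ • x + k₂ • y) y

namespace IsReflectionOrder

variable {V : Type*} [AddCommMonoid V] [Module ℝ V] {Φ : Set V} {r : V → V → Prop}

theorem flip (hr : IsReflectionOrder Φ r) : IsReflectionOrder Φ (fun x y => r y x) where
  irrefl := hr.irrefl
  trans x hx y hy z hz hxy hyz := hr.trans z hz y hy x hx hyz hxy
  total x hx y hy hne := (hr.total x hx y hy hne).symm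
  convex x hx y hy hxy k₁ k₂ hk₁ hk₂ hmem := by
    rw [add_comm] at hmem ⊢
    exact (hr.convex y hy x hx hxy k₂ k₁ hk₂ hk₁ hmem).symm

theorem between {x y z : V} (hr : IsReflectionOrder Φ r) (hx : x ∈ Φ) (hy : y ∈ Φ) (hz : z ∈ Φ)
    (hxy : r x y) {k₁ k₂ : ℝ} (hk₁ : 0 < k₁) (hk₂ : 0 < k₂) (hcomb : k₁ • x + k₂ • y = z) :
    r x z ∧ r z y := by
  subst hcomb
  exact hr.convex x hx y hy hxy k₁ k₂ hk₁ hk₂ hz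

theorem rel_iff_of_lt_imp {α : Type*} [LinearOrder α] (hr : IsReflectionOrder Φ r) {g : α → V}
    (hg : ∀ a, g a ∈ Φ) (hlt : ∀ a b, a < b → r (g a) (g b)) (a b : α) :
    r (g a) (g b) ↔ a < b := by
  refine ⟨fun hab => ?_, hlt a b⟩
  by_contra hnlt
  rcases (not_lt.mp hnlt).lt_or_eq with hba | rfl
  · exact hr.irrefl _ (hg a) (hr.trans _ (hg a) _ (hg b) _ (hg a) hab (hlt b a hba))
  · exact hr.irrefl _ (hg b) hab

end IsReflectionOrder

namespace Dihedral

def betaRoot (n : ℕ) : ℝ × ℝ := ((n : ℝ) + 1, n)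

def gammaRoot (n : ℕ) : ℝ × ℝ := (n, (n : ℝ) + 1)

def root (u : ℕ ⊕ₗ ℕᵒᵈ) : ℝ × ℝ :=
  Sum.elim betaRoot (gammaRoot ∘ OrderDual.ofDual) (ofLex u)

theorem betaRoot_mem (n : ℕ) : betaRoot n ∈ DihPos := ⟨n, Or.inl rfl⟩

theorem gammaRoot_mem (n : ℕ) : gammaRoot n ∈ DihPos := ⟨n, Or.inr rfl⟩

theorem root_mem : ∀ u, root u ∈ DihPos
  | .inl m => betaRoot_mem m
  | .inr n => gammaRoot_mem n

theorem exists_root_eq {x : ℝ × ℝ} (hx : x ∈ DihPos) : ∃ u, root u = x := by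
  obtain ⟨n, rfl | rfl⟩ := hx
  · exact ⟨toLex (Sum.inl n), rfl⟩
  · exact ⟨toLex (Sum.inr (OrderDual.toDual n)), rfl⟩

theorem betaRoot_injective : Function.Injective betaRoot := fun m n h => by
  simpa [betaRoot] using congrArg Prod.snd h

theorem gammaRoot_injective : Function.Injective gammaRoot := fun m n h => by
  simpa [gammaRoot] using congrArg Prod.fst h

theorem betaRoot_ne_gammaRoot (m n : ℕ) : betaRoot m ≠ gammaRoot n := fun h => by
  have := congrArg (fun p : ℝ × ℝ => p.1 - p.2) h
  norm_num [betaRoot, gammaRoot] at this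

theorem root_injective : Function.Injective root := by
  rintro (m | m) (n | n) h
  · exact congrArg (toLex ∘ Sum.inl) (betaRoot_injective h)
  · exact absurd h (betaRoot_ne_gammaRoot _ _)
  · exact absurd h.symm (betaRoot_ne_gammaRoot _ _)
  · exact congrArg (toLex ∘ Sum.inr) (gammaRoot_injective h)

theorem dihOrd1_betaRoot_betaRoot_iff {m n : ℕ} : DihOrd1 (betaRoot m) (betaRoot n) ↔ m < n := by
  refine ⟨?_, fun h => ⟨m, n, .inl ⟨rfl, rfl, h⟩⟩⟩
  rintro ⟨m', n', ⟨h1, h2, h⟩ | ⟨-, h2⟩ | ⟨h1, -⟩⟩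
  · rwa [betaRoot_injective h1, betaRoot_injective h2]
  · exact absurd h2 (betaRoot_ne_gammaRoot _ _)
  · exact absurd h1 (betaRoot_ne_gammaRoot _ _)

theorem dihOrd1_betaRoot_gammaRoot (m n : ℕ) : DihOrd1 (betaRoot m) (gammaRoot n) :=
  ⟨m, n, .inr (.inl ⟨rfl, rfl⟩)⟩

theorem not_dihOrd1_gammaRoot_betaRoot (m n : ℕ) : ¬ DihOrd1 (gammaRoot m) (betaRoot n) := by
  rintro ⟨m', n', ⟨h1, -⟩ | ⟨h1, -⟩ | ⟨-, h2, -⟩⟩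
  · exact betaRoot_ne_gammaRoot _ _ h1.symm
  · exact betaRoot_ne_gammaRoot _ _ h1.symm
  · exact betaRoot_ne_gammaRoot _ _ h2

theorem dihOrd1_gammaRoot_gammaRoot_iff {m n : ℕ} :
    DihOrd1 (gammaRoot m) (gammaRoot n) ↔ n < m := by
  refine ⟨?_, fun h => ⟨m, n, .inr (.inr ⟨rfl, rfl, h⟩)⟩⟩
  rintro ⟨m', n', ⟨h1, -⟩ | ⟨h1, -⟩ | ⟨h1, h2, h⟩⟩
  · exact absurd h1.symm (betaRoot_ne_gammaRoot _ _)
  · exact absurd h1.symm (betaRoot_ne_gammaRoot _ _)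
  · rwa [gammaRoot_injective h1, gammaRoot_injective h2]

theorem dihOrd1_root_iff (u v : ℕ ⊕ₗ ℕᵒᵈ) : DihOrd1 (root u) (root v) ↔ u < v := by
  rcases u with (m | m) <;> rcases v with (n | n)
  · exact dihOrd1_betaRoot_betaRoot_iff.trans Sum.Lex.inl_lt_inl_iff.symm
  · exact iff_of_true (dihOrd1_betaRoot_gammaRoot _ _) (Sum.Lex.inl_lt_inr _ _)
  · exact iff_of_false (not_dihOrd1_gammaRoot_betaRoot _ _) Sum.Lex.not_inr_lt_inl
  · exact dihOrd1_gammaRoot_gammaRoot_iff.trans (Sum.Lex.inr_lt_inr_iff (a := m) (b := n)).symm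

theorem exists_equiv_lt_iff_dihOrd1 :
    ∃ f : DihPos ≃ (ℕ ⊕ₗ ℕᵒᵈ), ∀ x y : DihPos, DihOrd1 x y ↔ f x < f y := by
  have hrange : Set.range root = DihPos :=
    Set.ext fun x => ⟨fun ⟨u, hu⟩ => hu ▸ root_mem u, exists_root_eq⟩
  let e := (Equiv.ofInjective root root_injective).trans (Equiv.setCongr hrange)
  refine ⟨e.symm, fun x y => ?_⟩
  have hroot (x : DihPos) : root (e.symm x) = x := congrArg Subtype.val (e.apply_symm_apply x)
  rw [← dihOrd1_root_iff, hroot, hroot]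

def lexNatDualOrderIso : (ℕ ⊕ₗ ℕᵒᵈ)ᵒᵈ ≃o ℕ ⊕ₗ ℕᵒᵈ :=
  (OrderIso.sumLexDualAntidistrib ℕ ℕᵒᵈ).trans
    (OrderIso.sumLexCongr (OrderIso.dualDual ℕ).symm (OrderIso.refl ℕᵒᵈ))

theorem exists_equiv_lt_iff_flip {S : Type*} {R : S → S → Prop} (f : S ≃ (ℕ ⊕ₗ ℕᵒᵈ))
    (hf : ∀ x y, R x y ↔ f x < f y) :
    ∃ g : S ≃ (ℕ ⊕ₗ ℕᵒᵈ), ∀ x y, R y x ↔ g x < g y :=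
  ⟨f.trans (OrderDual.toDual.trans lexNatDualOrderIso.toEquiv), fun x y => by
    simp [hf, lexNatDualOrderIso.lt_iff_lt]⟩

theorem smul_betaRoot_add_smul_gammaRoot_eq_betaRoot {m n : ℕ} :
    ((m + n + 1) / (2 * m + 1) : ℝ) • betaRoot m + ((n - m) / (2 * m + 1) : ℝ) • gammaRoot m
      = betaRoot n := by
  have : (2 * m + 1 : ℝ) ≠ 0 := by positivity
  simp only [betaRoot, gammaRoot, Prod.smul_mk, Prod.mk_add_mk, smul_eq_mul, Prod.mk.injEq]
  constructor <;> · field_simp; ring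

theorem smul_betaRoot_add_smul_gammaRoot_eq_gammaRoot {m n : ℕ} :
    ((n - m) / (2 * m + 1) : ℝ) • betaRoot m + ((m + n + 1) / (2 * m + 1) : ℝ) • gammaRoot m
      = gammaRoot n := by
  have : (2 * m + 1 : ℝ) ≠ 0 := by positivity
  simp only [betaRoot, gammaRoot, Prod.smul_mk, Prod.mk_add_mk, smul_eq_mul, Prod.mk.injEq]
  constructor <;> · field_simp; ring

theorem smul_betaRoot_add_smul_gammaRoot_succ (m : ℕ) :
    ((2 * m + 3) / (2 * m + 2) : ℝ) • betaRoot m + (1 / (2 * m + 2) : ℝ) • gammaRoot (m + 1)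
      = betaRoot (m + 1) := by
  have : (2 * m + 2 : ℝ) ≠ 0 := by positivity
  simp only [betaRoot, gammaRoot, Prod.smul_mk, Prod.mk_add_mk, smul_eq_mul, Prod.mk.injEq]
  push_cast
  constructor <;> · field_simp; ring

variable {r : ℝ × ℝ → ℝ × ℝ → Prop}

theorem betaRoot_between {m n : ℕ} (hr : IsReflectionOrder DihPos r)
    (hm : r (betaRoot m) (gammaRoot m)) (hmn : m < n) :
    r (betaRoot m) (betaRoot n) ∧ r (betaRoot n) (gammaRoot m) := by
  have hpos : (0 : ℝ) < n - m := sub_pos.mpr (by exact_mod_cast hmn)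
  exact hr.between (betaRoot_mem m) (gammaRoot_mem m) (betaRoot_mem n) hm (by positivity)
    (by positivity) smul_betaRoot_add_smul_gammaRoot_eq_betaRoot

theorem gammaRoot_between {m n : ℕ} (hr : IsReflectionOrder DihPos r)
    (hm : r (betaRoot m) (gammaRoot m)) (hmn : m < n) :
    r (betaRoot m) (gammaRoot n) ∧ r (gammaRoot n) (gammaRoot m) := by
  have hpos : (0 : ℝ) < n - m := sub_pos.mpr (by exact_mod_cast hmn)
  exact hr.between (betaRoot_mem m) (gammaRoot_mem m) (gammaRoot_mem n) hm (by positivity)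
    (by positivity) smul_betaRoot_add_smul_gammaRoot_eq_gammaRoot

theorem rel_betaRoot_gammaRoot (hr : IsReflectionOrder DihPos r)
    (h₀ : r (betaRoot 0) (gammaRoot 0)) (m : ℕ) : r (betaRoot m) (gammaRoot m) := by
  induction m with
  | zero => exact h₀
  | succ m ih =>
    exact (hr.between (betaRoot_mem m) (gammaRoot_mem (m + 1)) (betaRoot_mem (m + 1))
      (gammaRoot_between hr ih m.lt_succ_self).1 (by positivity) (by positivity)
      (smul_betaRoot_add_smul_gammaRoot_succ m)).2

theorem rel_root_of_lt (hr : IsReflectionOrder DihPos r) (h₀ : r (betaRoot 0) (gammaRoot 0)) :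
    ∀ u v : ℕ ⊕ₗ ℕᵒᵈ, u < v → r (root u) (root v) := by
  have hself := rel_betaRoot_gammaRoot hr h₀
  rintro (m | m) (n | n) huv
  · exact (betaRoot_between hr (hself m) (Sum.Lex.inl_lt_inl_iff.mp huv)).1
  · change r (betaRoot m) (gammaRoot n)
    rcases lt_trichotomy m n with hmn | rfl | hnm
    · exact (gammaRoot_between hr (hself m) hmn).1
    · exact hself m
    · exact (betaRoot_between hr (hself n) hnm).2
  · exact absurd huv Sum.Lex.not_inr_lt_inl
  · exact (gammaRoot_between hr (hself n)
      ((Sum.Lex.inr_lt_inr_iff (a := m) (b := n)).mp huv)).2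

theorem rel_iff_dihOrd1 (hr : IsReflectionOrder DihPos r) (h₀ : r (betaRoot 0) (gammaRoot 0)) :
    ∀ x ∈ DihPos, ∀ y ∈ DihPos, (r x y ↔ DihOrd1 x y) := by
  intro x hx y hy
  obtain ⟨u, rfl⟩ := exists_root_eq hx
  obtain ⟨v, rfl⟩ := exists_root_eq hy
  rw [hr.rel_iff_of_lt_imp root_mem (rel_root_of_lt hr h₀), dihOrd1_root_iff]

end Dihedral

open Dihedral

/-- On the infinite dihedral Coxeter system there are exactly two
reflection orders on the positive roots — the explicit order `DihOrd1` and its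
reverse — and in particular each has order type ω + ω*. -/
theorem stmt6 (r : ℝ × ℝ → ℝ × ℝ → Prop)
    (hirr : ∀ x ∈ DihPos, ¬ r x x)
    (htrans : ∀ x ∈ DihPos, ∀ y ∈ DihPos, ∀ z ∈ DihPos, r x y → r y z → r x z)
    (htot : ∀ x ∈ DihPos, ∀ y ∈ DihPos, x ≠ y → r x y ∨ r y x)
    (hrefl : ∀ x ∈ DihPos, ∀ y ∈ DihPos, r x y →
      ∀ k₁ k₂ : ℝ, 0 < k₁ → 0 < k₂ → k₁ • x + k₂ • y ∈ DihPos →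
        r x (k₁ • x + k₂ • y) ∧ r (k₁ • x + k₂ • y) y) :
    ((∀ x ∈ DihPos, ∀ y ∈ DihPos, (r x y ↔ DihOrd1 x y)) ∨
      (∀ x ∈ DihPos, ∀ y ∈ DihPos, (r x y ↔ DihOrd1 y x))) ∧
    ∃ f : DihPos ≃ (ℕ ⊕ₗ ℕᵒᵈ), ∀ x y : DihPos, r x.1 y.1 ↔ f x < f y := by
  have hr : IsReflectionOrder DihPos r := ⟨hirr, htrans, htot, hrefl⟩
  obtain ⟨f, hf⟩ := exists_equiv_lt_iff_dihOrd1
  rcases hr.total _ (betaRoot_mem 0) _ (gammaRoot_mem 0) (betaRoot_ne_gammaRoot 0 0) with h₀ | h₀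
  · have hiff := rel_iff_dihOrd1 hr h₀
    exact ⟨.inl hiff, f, fun x y => (hiff x x.2 y y.2).trans (hf x y)⟩
  · have hiff := rel_iff_dihOrd1 hr.flip h₀
    obtain ⟨g, hg⟩ := exists_equiv_lt_iff_flip f hf
    exact ⟨.inr fun x hx y hy => hiff y hy x hx, g, fun x y => (hiff y y.2 x x.2).trans (hg x y)⟩
end

section
/- Let W be an irreducible affine Weyl group with finite root system Φ₀, and let ≺ be a reflection order on Φ⁺_W. For each α ∈ Φ₀, the restriction of ≺ to the infinite dihedral set {α₀ + nδ : n ≥ 0} ∪ {(−α)₀ + nδ : n ≥ 0} has order type ω + ω*: it is either α₀ ≺ α₀+δ ≺ α₀+2δ ≺ ⋯ ≺ (−α)₀+2δ ≺ (−α)₀+δ ≺ (−α)₀, or the analogous order with α and −α exchanged. -/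
variable {V : Type*} [AddCommGroup V] [Module ℝ V]

/-- `S` is closed in the root set `Γ`: any positive combination of two elements of `S`
that is again in `Γ` lies in `S`. -/
def IsClosedIn {W : Type*} [AddCommGroup W] [Module ℝ W] (Γ S : Set W) : Prop :=
  ∀ a ∈ S, ∀ b ∈ S, ∀ k₁ k₂ : ℝ, 0 < k₁ → 0 < k₂ →
    k₁ • a + k₂ • b ∈ Γ → k₁ • a + k₂ • b ∈ S

/-- `S ⊆ Γ` is biclosed in `Γ` if both `S` and `Γ \ S` are closed. -/
def IsBiclosedIn {W : Type*} [AddCommGroup W] [Module ℝ W] (Γ S : Set W) : Prop :=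
  S ⊆ Γ ∧ IsClosedIn Γ S ∧ IsClosedIn Γ (Γ \ S)

/-- The affine positive root system `Φ⁺_W = {α + nδ : α ∈ Φ₀⁺, n ≥ 0} ∪
{α + nδ : α ∈ Φ₀⁻, n > 0}`, realized in `V × ℝ` with `δ = (0,1)`. -/
def AffPos (Φ₀ Φpos : Set V) : Set (V × ℝ) :=
  {x | (∃ α ∈ Φpos, ∃ n : ℕ, x = (α, (n : ℝ))) ∨
       (∃ α ∈ Φ₀ \ Φpos, ∃ n : ℕ, x = (α, (n : ℝ) + 1))}

open Classical in
/-- The affine root `α₀ + nδ`, where `α₀ = α` if `α ∈ Φ₀⁺` and `α₀ = α + δ` otherwise. -/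
noncomputable def affRoot (Φpos : Set V) (α : V) (n : ℕ) : V × ℝ :=
  (α, (if α ∈ Φpos then (0 : ℝ) else 1) + n)

/-- `r` is a reflection order on `Φ⁺_W`: a (strict) total order on `Φ⁺_W` all of whose
initial intervals are biclosed in `Φ⁺_W`. -/
def IsReflOrder (Φ₀ Φpos : Set V) (r : V × ℝ → V × ℝ → Prop) : Prop :=
  (∀ x ∈ AffPos Φ₀ Φpos, ¬ r x x) ∧
  (∀ x ∈ AffPos Φ₀ Φpos, ∀ y ∈ AffPos Φ₀ Φpos, ∀ z ∈ AffPos Φ₀ Φpos,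
    r x y → r y z → r x z) ∧
  (∀ x ∈ AffPos Φ₀ Φpos, ∀ y ∈ AffPos Φ₀ Φpos, x ≠ y → r x y ∨ r y x) ∧
  (∀ S ⊆ AffPos Φ₀ Φpos,
    (∀ x ∈ S, ∀ y ∈ AffPos Φ₀ Φpos, r y x → y ∈ S) →
      IsBiclosedIn (AffPos Φ₀ Φpos) S)

/-!
In a reflection order, an affine root that is a positive combination of two others lies strictly
between them: an initial section containing both contains the combination, and so does a final one.
Since `α₀ + (k+1)δ` is the midpoint of `α₀ + kδ` and `α₀ + (k+2)δ`, each of the sequences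
`(α₀ + nδ)` and `((−α)₀ + nδ)` is strictly monotone. Since `α₀ + (−α)₀ = δ`, the root
`α₀ + (2m+n+1)δ = 2(α₀ + mδ) + ((−α)₀ + nδ)` lies between `α₀ + mδ` and `(−α)₀ + nδ`; this ties the
two sequences together: if one increases it lies entirely below the other, which then decreases,
and they cannot both decrease.
-/

open Set OrderDual

section Dihedral

variable {ι : Type*} [LinearOrder ι]

theorem Set.mem_uIoo {a b x : ι} : x ∈ uIoo a b ↔ a < x ∧ x < b ∨ b < x ∧ x < a := by
  rw [uIoo_eq_union]
  rfl

theorem strictMono_nat_of_mem_uIoo {x : ℕ → ι} (hx : ∀ k, x (k + 1) ∈ uIoo (x k) (x (k + 2)))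
    (h01 : x 0 < x 1) : StrictMono x := by
  refine strictMono_nat_of_lt_succ fun k => ?_
  induction k with
  | zero => exact h01
  | succ k ih =>
    rcases mem_uIoo.1 (hx k) with ⟨-, h⟩ | ⟨-, h⟩
    · exact h
    · exact absurd ih h.not_gt

theorem strictMono_or_strictAnti_of_mem_uIoo {x : ℕ → ι}
    (hx : ∀ k, x (k + 1) ∈ uIoo (x k) (x (k + 2))) : StrictMono x ∨ StrictAnti x := by
  rcases mem_uIoo.1 (hx 0) with ⟨h01, -⟩ | ⟨-, h10⟩
  · exact Or.inl (strictMono_nat_of_mem_uIoo hx h01)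
  · refine Or.inr (strictMono_toDual_comp_iff.1 (strictMono_nat_of_mem_uIoo (fun k => ?_) h10))
    simpa using hx k

variable {b c : ℕ → ι}

theorem strictAnti_and_lt_of_strictMono (hb : StrictMono b)
    (hc : ∀ k, c (k + 1) ∈ uIoo (c k) (c (k + 2)))
    (hbc : ∀ m n, b (2 * m + n + 1) ∈ uIoo (b m) (c n))
    (hcb : ∀ m n, c (2 * m + n + 1) ∈ uIoo (c m) (b n)) :
    StrictAnti c ∧ ∀ m n, b m < c n := by
  have hlt : ∀ m n, b m < c n := by
    intro m n
    rcases mem_uIoo.1 (hbc m n) with ⟨h₁, h₂⟩ | ⟨-, h⟩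
    · exact h₁.trans h₂
    · exact absurd (hb (by omega : m < 2 * m + n + 1)) h.not_gt
  refine ⟨(strictMono_or_strictAnti_of_mem_uIoo hc).resolve_left fun hc' => ?_, hlt⟩
  rcases mem_uIoo.1 (hcb 0 0) with ⟨-, h⟩ | ⟨-, h⟩
  · exact (hlt 0 _).not_gt h
  · exact (hc' (by norm_num : 0 < 2 * 0 + 0 + 1)).not_gt h

theorem strictMono_strictAnti_of_mem_uIoo
    (hb : ∀ k, b (k + 1) ∈ uIoo (b k) (b (k + 2)))
    (hc : ∀ k, c (k + 1) ∈ uIoo (c k) (c (k + 2)))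
    (hbc : ∀ m n, b (2 * m + n + 1) ∈ uIoo (b m) (c n))
    (hcb : ∀ m n, c (2 * m + n + 1) ∈ uIoo (c m) (b n)) :
    (StrictMono b ∧ StrictAnti c ∧ ∀ m n, b m < c n) ∨
      (StrictMono c ∧ StrictAnti b ∧ ∀ m n, c m < b n) := by
  rcases strictMono_or_strictAnti_of_mem_uIoo hb with hb' | hb'
  · exact Or.inl ⟨hb', strictAnti_and_lt_of_strictMono hb' hc hbc hcb⟩
  rcases strictMono_or_strictAnti_of_mem_uIoo hc with hc' | hc'
  · exact Or.inr ⟨hc', strictAnti_and_lt_of_strictMono hc' hb hcb hbc⟩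
  exfalso
  have hb10 : b (2 * 0 + 0 + 1) < b 0 := hb' (by norm_num)
  have hc10 : c (2 * 0 + 0 + 1) < c 0 := hc' (by norm_num)
  rcases mem_uIoo.1 (hbc 0 0) with ⟨h, -⟩ | ⟨hc0b1, -⟩
  · exact h.not_gt hb10
  rcases mem_uIoo.1 (hcb 0 0) with ⟨h, -⟩ | ⟨hb0c1, -⟩
  · exact h.not_gt hc10
  exact lt_asymm (hc0b1.trans hb10) (hb0c1.trans hc10)

end Dihedral

theorem Sum.Lex.strictMono_elim {α β γ : Type*} [Preorder α] [Preorder β] [Preorder γ]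
    {f : α → γ} {g : β → γ} (hf : StrictMono f) (hg : StrictMono g) (hfg : ∀ a b, f a < g b) :
    StrictMono fun u : α ⊕ₗ β => Sum.elim f g (ofLex u) := by
  intro u v huv
  rcases Sum.Lex.lt_def.1 huv with ⟨h⟩ | ⟨h⟩ | ⟨a, b⟩
  · exact hf h
  · exact hg h
  · exact hfg a b

theorem exists_equiv_of_rel_iff_lt {ι W : Type*} [LinearOrder ι] {r : W → W → Prop} {S : Set W}
    {G : ι → W} (hG : ∀ u v, r (G u) (G v) ↔ u < v) (hS : ∀ x, x ∈ S ↔ ∃ u, G u = x) :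
    ∃ f : S ≃ ι, ∀ x y : S, r x y ↔ f x < f y := by
  have not_lt_of_eq : ∀ u v, G u = G v → ¬ u < v := fun u v h huv =>
    lt_irrefl v ((hG v v).1 (h ▸ (hG u v).2 huv))
  let e : ι → S := fun u => ⟨G u, (hS _).2 ⟨u, rfl⟩⟩
  have he : e.Bijective := by
    refine ⟨fun u v h => ?_, fun ⟨x, hx⟩ => ?_⟩
    · have h' : G u = G v := congrArg Subtype.val h
      exact le_antisymm (not_lt.1 (not_lt_of_eq v u h'.symm)) (not_lt.1 (not_lt_of_eq u v h'))
    · obtain ⟨u, rfl⟩ := (hS x).1 hx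
      exact ⟨u, rfl⟩
  refine ⟨(Equiv.ofBijective e he).symm, fun x y => ?_⟩
  obtain ⟨u, rfl⟩ := he.2 x
  obtain ⟨v, rfl⟩ := he.2 y
  simpa only [Equiv.ofBijective_symm_apply_apply] using hG u v

section AffineRoots

variable {Φ₀ Φpos : Set V} {α : V}

omit [Module ℝ V] in
theorem neg_mem_of_eq_union_neg (hΦ₀ : Φ₀ = Φpos ∪ (-Φpos)) (hα : α ∈ Φ₀) : -α ∈ Φ₀ := by
  rw [hΦ₀] at hα ⊢
  rcases hα with h | h
  · exact Or.inr (by simpa using h)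
  · exact Or.inl h

omit [AddCommGroup V] [Module ℝ V] in
theorem mem_affPos_affRoot (hα : α ∈ Φ₀) (n : ℕ) : affRoot Φpos α n ∈ AffPos Φ₀ Φpos := by
  by_cases h : α ∈ Φpos
  · exact Or.inl ⟨α, h, n, by simp [affRoot, h]⟩
  · exact Or.inr ⟨α, ⟨hα, h⟩, n, by simp [affRoot, h, add_comm]⟩

omit [AddCommGroup V] [Module ℝ V] in
variable (Φpos) in
noncomputable def affRootPos (hα : α ∈ Φ₀) (n : ℕ) : AffPos Φ₀ Φpos :=
  ⟨affRoot Φpos α n, mem_affPos_affRoot hα n⟩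

omit [AddCommGroup V] [Module ℝ V] in
theorem affRoot_injective : Function.Injective (affRoot Φpos α) := fun m n h => by
  have h' := congrArg Prod.snd h
  simp only [affRoot, add_right_inj, Nat.cast_inj] at h'
  exact h'

omit [Module ℝ V] in
theorem ne_zero_of_disjoint_neg (hΦ₀ : Φ₀ = Φpos ∪ (-Φpos)) (hposdisj : Disjoint Φpos (-Φpos))
    (hα : α ∈ Φ₀) : α ≠ 0 := by
  rintro rfl
  have h0 : (0 : V) ∈ Φpos := by simpa [hΦ₀] using hα
  exact Set.disjoint_left.1 hposdisj h0 (by simpa using h0)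

theorem affRoot_ne_affRoot_neg (hα0 : α ≠ 0) (m n : ℕ) :
    affRoot Φpos α m ≠ affRoot Φpos (-α) n := by
  intro h
  have hα : α = -α := congrArg Prod.fst h
  have h2α : (2 : ℝ) • α = 0 := by
    rw [two_smul]
    nth_rw 2 [hα]
    exact add_neg_cancel α
  exact hα0 ((smul_eq_zero.1 h2α).resolve_left two_ne_zero)

omit [Module ℝ V] in
theorem affRoot_add_affRoot_neg (hΦ₀ : Φ₀ = Φpos ∪ (-Φpos)) (hposdisj : Disjoint Φpos (-Φpos))
    (hα : α ∈ Φ₀) (m n : ℕ) :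
    affRoot Φpos α m + affRoot Φpos (-α) n = ((0 : V), ((m + n + 1 : ℕ) : ℝ)) := by
  have hα' : α ∈ Φpos ∨ -α ∈ Φpos := by simpa [hΦ₀] using hα
  have hnot : ¬ (α ∈ Φpos ∧ -α ∈ Φpos) := fun h =>
    Set.disjoint_left.1 hposdisj h.1 (by simpa using h.2)
  simp only [affRoot, Prod.mk_add_mk, add_neg_cancel, Prod.mk.injEq, true_and]
  push_cast
  split_ifs <;> first | tauto | ring

omit [Module ℝ V] in
theorem affRoot_add_delta (α : V) (m k : ℕ) :
    affRoot Φpos α m + ((0 : V), (k : ℝ)) = affRoot Φpos α (m + k) := by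
  simp only [affRoot, Prod.mk_add_mk, add_zero, Nat.cast_add, add_assoc]

theorem midpoint_affRoot (α : V) (k : ℕ) :
    (1 / 2 : ℝ) • affRoot Φpos α k + (1 / 2 : ℝ) • affRoot Φpos α (k + 2) =
      affRoot Φpos α (k + 1) := by
  simp only [affRoot, Prod.smul_mk, Prod.mk_add_mk, Prod.mk.injEq, smul_eq_mul]
  constructor
  · module
  · push_cast; ring

theorem two_smul_affRoot_add_affRoot_neg (hΦ₀ : Φ₀ = Φpos ∪ (-Φpos))
    (hposdisj : Disjoint Φpos (-Φpos)) (hα : α ∈ Φ₀) (m n : ℕ) :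
    (2 : ℝ) • affRoot Φpos α m + (1 : ℝ) • affRoot Φpos (-α) n =
      affRoot Φpos α (2 * m + n + 1) := by
  rw [two_smul, one_smul, add_assoc, affRoot_add_affRoot_neg hΦ₀ hposdisj hα, affRoot_add_delta]
  congr 1
  ring

end AffineRoots

namespace IsReflOrder

variable {Φ₀ Φpos : Set V} {r : V × ℝ → V × ℝ → Prop}

theorem isStrictTotalOrder (hr : IsReflOrder Φ₀ Φpos r) :
    IsStrictTotalOrder (AffPos Φ₀ Φpos) (fun x y => r x y) where
  trichotomous x y hxy hyx := by
    by_contra hne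
    exact (hr.2.2.1 x x.2 y y.2 (hne ∘ Subtype.ext)).elim hxy hyx
  irrefl x := hr.1 x x.2
  trans x y z := hr.2.1 x x.2 y y.2 z z.2

/-- Its `<` is definitionally `r`, so order facts about `affRootPos` are facts about `r`. -/
noncomputable abbrev toLinearOrder (hr : IsReflOrder Φ₀ Φpos r) : LinearOrder (AffPos Φ₀ Φpos) :=
  haveI := hr.isStrictTotalOrder
  haveI := Classical.decRel (fun x y : AffPos Φ₀ Φpos => r x y)
  linearOrderOfSTO fun x y => r x y

theorem isBiclosedIn_image_val (hr : IsReflOrder Φ₀ Φpos r) {L : Set (AffPos Φ₀ Φpos)}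
    (hL : letI := hr.toLinearOrder; IsLowerSet L) :
    IsBiclosedIn (AffPos Φ₀ Φpos) (Subtype.val '' L) := by
  let := hr.toLinearOrder
  refine hr.2.2.2 _ (image_subset_iff.2 fun x _ => x.2) ?_
  rintro _ ⟨x, hx, rfl⟩ y hy hyx
  exact ⟨⟨y, hy⟩, hL (le_of_lt (show (⟨y, hy⟩ : AffPos Φ₀ Φpos) < x from hyx)) hx, rfl⟩

theorem mem_uIoo_of_smul_add_smul (hr : IsReflOrder Φ₀ Φpos r) {a b c : AffPos Φ₀ Φpos}
    {k₁ k₂ : ℝ} (hk₁ : 0 < k₁) (hk₂ : 0 < k₂) (habc : k₁ • (a : V × ℝ) + k₂ • (b : V × ℝ) = c)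
    (hca : c ≠ a) (hcb : c ≠ b) :
    letI := hr.toLinearOrder; c ∈ uIoo a b := by
  let := hr.toLinearOrder
  have hc : k₁ • (a : V × ℝ) + k₂ • (b : V × ℝ) ∈ AffPos Φ₀ Φpos := habc ▸ c.2
  have not_lt_lt : ¬ (a < c ∧ b < c) := by
    rintro ⟨hac, hbc⟩
    have := (hr.isBiclosedIn_image_val (isLowerSet_Iio c)).2.1 a ⟨a, hac, rfl⟩ b ⟨b, hbc, rfl⟩
      k₁ k₂ hk₁ hk₂ hc
    rw [habc, Subtype.val_injective.mem_set_image] at this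
    exact lt_irrefl c this
  have not_gt_gt : ¬ (c < a ∧ c < b) := by
    rintro ⟨hca, hcb⟩
    have := (hr.isBiclosedIn_image_val (isLowerSet_Iic c)).2.2 a
      ⟨a.2, by rw [Subtype.val_injective.mem_set_image]; exact hca.not_ge⟩ b
      ⟨b.2, by rw [Subtype.val_injective.mem_set_image]; exact hcb.not_ge⟩ k₁ k₂ hk₁ hk₂ hc
    rw [habc] at this
    exact this.2 ⟨c, mem_Iic.2 le_rfl, rfl⟩
  rcases hca.lt_or_gt with hca | hac <;> rcases hcb.lt_or_gt with hcb | hbc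
  · exact absurd ⟨hca, hcb⟩ not_gt_gt
  · exact mem_uIoo_of_gt hbc hca
  · exact mem_uIoo_of_lt hac hcb
  · exact absurd ⟨hac, hbc⟩ not_lt_lt

variable {γ γ' : V}

theorem affRootPos_succ_mem_uIoo (hr : IsReflOrder Φ₀ Φpos r) (hγ : γ ∈ Φ₀) (k : ℕ) :
    letI := hr.toLinearOrder
    affRootPos Φpos hγ (k + 1) ∈ uIoo (affRootPos Φpos hγ k) (affRootPos Φpos hγ (k + 2)) :=
  hr.mem_uIoo_of_smul_add_smul one_half_pos one_half_pos (midpoint_affRoot γ k)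
    (fun h => by have := affRoot_injective (congrArg Subtype.val h); omega)
    (fun h => by have := affRoot_injective (congrArg Subtype.val h); omega)

theorem affRootPos_mem_uIoo_neg (hr : IsReflOrder Φ₀ Φpos r) (hΦ₀ : Φ₀ = Φpos ∪ (-Φpos))
    (hposdisj : Disjoint Φpos (-Φpos)) (hγ : γ ∈ Φ₀) (hγ' : γ' ∈ Φ₀) (hneg : γ' = -γ)
    (m n : ℕ) :
    letI := hr.toLinearOrder
    affRootPos Φpos hγ (2 * m + n + 1) ∈ uIoo (affRootPos Φpos hγ m) (affRootPos Φpos hγ' n) := by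
  subst hneg
  exact hr.mem_uIoo_of_smul_add_smul two_pos one_pos
    (two_smul_affRoot_add_affRoot_neg hΦ₀ hposdisj hγ m n)
    (fun h => by have := affRoot_injective (congrArg Subtype.val h); omega)
    (fun h => affRoot_ne_affRoot_neg (ne_zero_of_disjoint_neg hΦ₀ hposdisj hγ) _ _
      (congrArg Subtype.val h))

theorem exists_equiv_sumLex_of_strictMono (hr : IsReflOrder Φ₀ Φpos r) (hγ : γ ∈ Φ₀) (hγ' : γ' ∈ Φ₀)
    {S : Set (V × ℝ)} (hS : ∀ x, x ∈ S ↔ ∃ n : ℕ, x = affRoot Φpos γ n ∨ x = affRoot Φpos γ' n) :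
    letI := hr.toLinearOrder
    StrictMono (affRootPos Φpos hγ) → StrictAnti (affRootPos Φpos hγ') →
      (∀ m n, affRootPos Φpos hγ m < affRootPos Φpos hγ' n) →
      ∃ f : S ≃ (ℕ ⊕ₗ ℕᵒᵈ), ∀ x y : S, r x y ↔ f x < f y := by
  let := hr.toLinearOrder
  intro hb hc hbc
  refine exists_equiv_of_rel_iff_lt
    (G := fun u => (Sum.elim (affRootPos Φpos hγ) (affRootPos Φpos hγ' ∘ ofDual) (ofLex u) :))
    (fun u v => (Sum.Lex.strictMono_elim hb hc.dual_left hbc).lt_iff_lt) fun x => ?_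
  rw [hS]
  constructor
  · rintro ⟨n, rfl | rfl⟩
    exacts [⟨toLex (.inl n), rfl⟩, ⟨toLex (.inr (toDual n)), rfl⟩]
  · rintro ⟨u | u, rfl⟩
    exacts [⟨u, Or.inl rfl⟩, ⟨ofDual u, Or.inr rfl⟩]

end IsReflOrder

theorem stmt8_general (Φ₀ Φpos : Set V)
    (hΦ₀ : Φ₀ = Φpos ∪ (-Φpos)) (hposdisj : Disjoint Φpos (-Φpos))
    (r : V × ℝ → V × ℝ → Prop) (hr : IsReflOrder Φ₀ Φpos r)
    (α : V) (hα : α ∈ Φ₀) :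
    (((∀ m n : ℕ, r (affRoot Φpos α m) (affRoot Φpos (-α) n)) ∧
      (∀ m n : ℕ, m < n → r (affRoot Φpos α m) (affRoot Φpos α n)) ∧
      (∀ m n : ℕ, m < n → r (affRoot Φpos (-α) n) (affRoot Φpos (-α) m))) ∨
     ((∀ m n : ℕ, r (affRoot Φpos (-α) m) (affRoot Φpos α n)) ∧
      (∀ m n : ℕ, m < n → r (affRoot Φpos (-α) m) (affRoot Φpos (-α) n)) ∧
      (∀ m n : ℕ, m < n → r (affRoot Φpos α n) (affRoot Φpos α m)))) ∧
    ∃ f : {x : V × ℝ | ∃ n : ℕ, x = affRoot Φpos α n ∨ x = affRoot Φpos (-α) n} ≃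
        (ℕ ⊕ₗ ℕᵒᵈ), ∀ x y, r x.1 y.1 ↔ f x < f y := by
  let := hr.toLinearOrder
  have hα' := neg_mem_of_eq_union_neg hΦ₀ hα
  rcases strictMono_strictAnti_of_mem_uIoo (hr.affRootPos_succ_mem_uIoo hα)
      (hr.affRootPos_succ_mem_uIoo hα') (hr.affRootPos_mem_uIoo_neg hΦ₀ hposdisj hα hα' rfl)
      (hr.affRootPos_mem_uIoo_neg hΦ₀ hposdisj hα' hα (neg_neg α).symm)
    with ⟨hb, hc, hbc⟩ | ⟨hc, hb, hcb⟩
  · exact ⟨Or.inl ⟨hbc, fun _ _ h => hb h, fun _ _ h => hc h⟩,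
      hr.exists_equiv_sumLex_of_strictMono hα hα' (fun _ => Iff.rfl) hb hc hbc⟩
  · exact ⟨Or.inr ⟨hcb, fun _ _ h => hc h, fun _ _ h => hb h⟩,
      hr.exists_equiv_sumLex_of_strictMono hα' hα (fun _ => exists_congr fun _ => or_comm)
        hc hb hcb⟩

/-- For a reflection order `≺` on `Φ⁺_W` and `α ∈ Φ₀`, the restriction of
`≺` to `{α₀ + nδ} ∪ {(−α)₀ + nδ}` is either
`α₀ ≺ α₀+δ ≺ ⋯ ≺ (−α)₀+2δ ≺ (−α)₀+δ ≺ (−α)₀` or the analogue with `α, −α` exchanged;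
in particular it has order type ω + ω*. -/
theorem stmt8 (Φ₀ Φpos : Set V) (hfin : Φ₀.Finite)
    (hΦ₀ : Φ₀ = Φpos ∪ (-Φpos)) (hposdisj : Disjoint Φpos (-Φpos))
    (r : V × ℝ → V × ℝ → Prop) (hr : IsReflOrder Φ₀ Φpos r)
    (α : V) (hα : α ∈ Φ₀) :
    (((∀ m n : ℕ, r (affRoot Φpos α m) (affRoot Φpos (-α) n)) ∧
      (∀ m n : ℕ, m < n → r (affRoot Φpos α m) (affRoot Φpos α n)) ∧
      (∀ m n : ℕ, m < n → r (affRoot Φpos (-α) n) (affRoot Φpos (-α) m))) ∨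
     ((∀ m n : ℕ, r (affRoot Φpos (-α) m) (affRoot Φpos α n)) ∧
      (∀ m n : ℕ, m < n → r (affRoot Φpos (-α) m) (affRoot Φpos (-α) n)) ∧
      (∀ m n : ℕ, m < n → r (affRoot Φpos α n) (affRoot Φpos α m)))) ∧
    ∃ f : {x : V × ℝ | ∃ n : ℕ, x = affRoot Φpos α n ∨ x = affRoot Φpos (-α) n} ≃
        (ℕ ⊕ₗ ℕᵒᵈ), ∀ x y, r x.1 y.1 ↔ f x < f y :=
  stmt8_general Φ₀ Φpos hΦ₀ hposdisj r hr α hα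
end

section
/- Let Φ be a finite crystallographic root system of rank n with a fixed positive system Λ⁺ and simple system Δ. Consider a maximal chain of biclosed sets of the form Bᵢ = Λ⁺_{Δ_{i,1}, Δ_{i,2}} = (Λ⁺ \ Φ_{Δ_{i,1}}) ∪ Φ_{Δ_{i,2}}, i = 0,…,2n, where Δ_{0,1} = Δ, Δ_{0,2} = ∅, Δ_{2n,1} = ∅, Δ_{2n,2} = Δ, Δ_{i,1} and Δ_{i,2} are always orthogonal subsets of Δ, and at each step exactly one of the following happens: Δ_{i+1,1} = Δ_{i,1} minus one element (and Δ_{i+1,2} = Δ_{i,2}), or Δ_{i+1,2} = Δ_{i,2} plus one element (and Δ_{i+1,1} = Δ_{i,1}). Define the signature ε₀⋯ε_{2n−1} by εᵢ = 0 if |Δ_{i,1}| decreases at step i and εᵢ = 1 if |Δ_{i,2}| increases at step i. Then in every initial segment of length < 2n of the signature, the number of 1's is strictly less than the number of 0's; i.e., the signature is an extended Dyck word of length 2n. -/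
/-!
Track the cardinalities along the chain: `|Δ_{i,1}| = n - #0's` and `|Δ_{i,2}| = #1's` among
`ε₀ … ε_{i-1}`. If a proper nonempty prefix had at least as many `1`s as `0`s, both sets would
be nonempty and `|Δ_{i,1}| + |Δ_{i,2}| ≥ n`, so the two orthogonal sets would split the connected
Dynkin diagram into two parts with no edge between them.
-/

open Finset

namespace SimpleGraph

variable {ι : Type*} {G : SimpleGraph ι}

lemma Connected.card_add_card_lt_of_forall_not_adj [Fintype ι] (hG : G.Connected)
    {s t : Finset ι} (hs : s.Nonempty) (ht : t.Nonempty) (hst : Disjoint s t)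
    (hadj : ∀ a ∈ s, ∀ b ∈ t, ¬ G.Adj a b) :
    #s + #t < Fintype.card ι := by
  classical
  rw [← card_union_of_disjoint hst]
  refine (card_le_univ _).lt_of_ne fun hcard => ?_
  have huniv : s ∪ t = univ := eq_univ_of_card _ hcard
  obtain ⟨a, ha⟩ := hs
  obtain ⟨b, hb⟩ := ht
  obtain ⟨w⟩ := hG.preconnected a b
  obtain ⟨d, -, hd₁, hd₂⟩ :=
    w.exists_boundary_dart (s : Set ι) ha fun hb' => Finset.disjoint_left.mp hst hb' hb
  have hd₂t : d.snd ∈ t := by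
    have hd : d.snd ∈ s ∪ t := huniv ▸ mem_univ _
    exact (mem_union.mp hd).resolve_left hd₂
  exact hadj _ hd₁ _ hd₂t d.adj

end SimpleGraph

namespace Nat

variable {f : ℕ → ℕ} {p : ℕ → Prop} [DecidablePred p] {m : ℕ}

lemma eq_add_count_of_succ_eq (hf : ∀ i < m, f (i + 1) = f i + if p i then 1 else 0) :
    ∀ k ≤ m, f k = f 0 + count p k := by
  intro k hk
  induction k with
  | zero => rfl
  | succ k ih => rw [hf k hk, ih (k.le_succ.trans hk), count_succ, add_assoc]

lemma add_count_eq_of_succ_add_eq (hf : ∀ i < m, f (i + 1) + (if p i then 1 else 0) = f i) :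
    ∀ k ≤ m, f k + count p k = f 0 := by
  intro k hk
  induction k with
  | zero => rfl
  | succ k ih => rw [← ih (k.le_succ.trans hk), ← hf k hk, count_succ]; ring

end Nat

theorem stmt16_general {ι : Type*} [Fintype ι] (G : SimpleGraph ι) (hconn : G.Connected)
    (n : ℕ) (hn : n = Fintype.card ι)
    (D1 D2 : ℕ → Finset ι) (ε : ℕ → Bool)
    (horth : ∀ i ≤ 2 * n, ∀ a ∈ D1 i, ∀ b ∈ D2 i, ¬ G.Adj a b)
    (hdisj : ∀ i ≤ 2 * n, Disjoint (D1 i) (D2 i))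
    (h10 : D1 0 = Finset.univ) (h20 : D2 0 = ∅)
    (hstep : ∀ i < 2 * n,
      (ε i = false → D1 (i + 1) ⊆ D1 i ∧ (D1 (i + 1)).card + 1 = (D1 i).card ∧
        D2 (i + 1) = D2 i) ∧
      (ε i = true → D2 i ⊆ D2 (i + 1) ∧ (D2 i).card + 1 = (D2 (i + 1)).card ∧
        D1 (i + 1) = D1 i)) :
    ∀ k, 0 < k → k < 2 * n →
      ((Finset.range k).filter (fun i => ε i = true)).card <
        ((Finset.range k).filter (fun i => ε i = false)).card := by
  have hD1 := Nat.add_count_eq_of_succ_add_eq (m := 2 * n) (f := fun i => #(D1 i))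
    (p := (ε · = false))
    fun i hi => by cases h : ε i <;> simp [h, (hstep i hi).1, (hstep i hi).2]
  have hD2 := Nat.eq_add_count_of_succ_eq (m := 2 * n) (f := fun i => #(D2 i))
    (p := (ε · = true))
    fun i hi => by cases h : ε i <;> simp [h, (hstep i hi).1, (hstep i hi).2]
  intro k hk₀ hk
  simp only [h10, h20, card_univ, card_empty, ← hn, zero_add] at hD1 hD2
  rw [← Nat.count_eq_card_filter_range, ← Nat.count_eq_card_filter_range]
  have hcount : Nat.count (ε · = true) k + Nat.count (ε · = false) k = k := by
    simpa [Nat.count_eq_card_filter_range] using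
      card_filter_add_card_filter_not (s := range k) (fun i => ε i = true)
  have h1 := hD1 k hk.le
  have h2 := hD2 k hk.le
  by_contra! hle
  have hlt := hconn.card_add_card_lt_of_forall_not_adj
    (card_pos.mp (by omega)) (card_pos.mp (by omega)) (hdisj k hk.le) (horth k hk.le)
  omega

/-- In a maximal admissible chain of biclosed sets
`Bᵢ = Λ⁺_{Δ_{i,1}, Δ_{i,2}}` over an irreducible (connected Dynkin diagram) root system
of rank `n` — encoded combinatorially by the pairs `(D1 i, D2 i)` of mutually
orthogonal (non-adjacent, disjoint) subsets of the `n` simple roots, with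
`D1 0 = Δ, D2 0 = ∅, D1 (2n) = ∅, D2 (2n) = Δ`, where at step `i` either `D1`
loses one element (`ε i = 0`) or `D2` gains one element (`ε i = 1`) —
the signature `ε` is an extended Dyck word of length `2n`: every nonempty initial
segment of length `< 2n` has strictly more `0`s than `1`s. -/
theorem stmt16 {ι : Type*} [Fintype ι] (G : SimpleGraph ι) (hconn : G.Connected)
    (n : ℕ) (hn : n = Fintype.card ι)
    (D1 D2 : ℕ → Finset ι) (ε : ℕ → Bool)
    (horth : ∀ i ≤ 2 * n, ∀ a ∈ D1 i, ∀ b ∈ D2 i, ¬ G.Adj a b)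
    (hdisj : ∀ i ≤ 2 * n, Disjoint (D1 i) (D2 i))
    (h10 : D1 0 = Finset.univ) (h20 : D2 0 = ∅)
    (h1top : D1 (2 * n) = ∅) (h2top : D2 (2 * n) = Finset.univ)
    (hstep : ∀ i < 2 * n,
      (ε i = false → D1 (i + 1) ⊆ D1 i ∧ (D1 (i + 1)).card + 1 = (D1 i).card ∧
        D2 (i + 1) = D2 i) ∧
      (ε i = true → D2 i ⊆ D2 (i + 1) ∧ (D2 i).card + 1 = (D2 (i + 1)).card ∧
        D1 (i + 1) = D1 i)) :
    ∀ k, 0 < k → k < 2 * n →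
      ((Finset.range k).filter (fun i => ε i = true)).card <
        ((Finset.range k).filter (fun i => ε i = false)).card :=
  stmt16_general G hconn n hn D1 D2 ε horth hdisj h10 h20 hstep
end

section
/- For the path graph on vertices α₁,…,αₙ (type Aₙ Dynkin diagram, edges αᵢ–αᵢ₊₁), and for every extended Dyck word ε₀ε₁⋯ε_{2n−1} of length 2n, there exists a sequence of pairs (Δ_{i,1}, Δ_{i,2}), i = 0,…,2n, of non-adjacent (orthogonal) subsets of vertices with Δ_{0,1} = {α₁,…,αₙ}, Δ_{0,2} = ∅, Δ_{2n,1} = ∅, Δ_{2n,2} = {α₁,…,αₙ}, such that at step i: if εᵢ = 0 then Δ_{i+1,1} ⊊ Δ_{i,1} with |Δ_{i,1}| − 1 = |Δ_{i+1,1}| and Δ_{i+1,2} = Δ_{i,2}; if εᵢ = 1 then Δ_{i+1,2} ⊋ Δ_{i,2} with |Δ_{i,2}| + 1 = |Δ_{i+1,2}| and Δ_{i+1,1} = Δ_{i,1}. -/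
/-!
Take `Δ_{i,1}` to be the first `n - zᵢ` vertices of the path and `Δ_{i,2}` its last `oᵢ`
vertices, where `zᵢ` and `oᵢ` count the zeros and ones among the first `i` letters of the word.
A zero shortens the first segment by one vertex and a one lengthens the second. For
`0 < i < 2n` the Dyck condition `oᵢ < zᵢ` leaves at least one vertex strictly between the two
segments, so they are orthogonal; at `i = 0` and `i = 2n` one of them is empty.
-/

/-- An extended Dyck word of length `2n`: a binary string (`false` = 0, `true` = 1)
with `n` zeros and `n` ones such that every nonempty initial segment of length `< 2n`
has strictly more zeros than ones. -/
def IsExtDyck (n : ℕ) (w : List Bool) : Prop :=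
  w.length = 2 * n ∧ w.count false = n ∧ w.count true = n ∧
    ∀ k, 0 < k → k < 2 * n →
      (w.take k).count true < (w.take k).count false

/-- Adjacency in the type `Aₙ` Dynkin diagram (path graph on `Fin n`). -/
def PathAdj {n : ℕ} (a b : Fin n) : Prop :=
  (a : ℕ) + 1 = (b : ℕ) ∨ (b : ℕ) + 1 = (a : ℕ)

def initialVertices (n m : ℕ) : Finset (Fin n) := {a | (a : ℕ) < m}

def finalVertices (n k : ℕ) : Finset (Fin n) := {a | (a.rev : ℕ) < k}

section Segments

variable {n : ℕ}

@[simp]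
lemma mem_initialVertices {m : ℕ} {a : Fin n} : a ∈ initialVertices n m ↔ (a : ℕ) < m := by
  simp [initialVertices]

@[simp]
lemma mem_finalVertices {k : ℕ} {a : Fin n} : a ∈ finalVertices n k ↔ n ≤ a + k := by
  simp only [finalVertices, Finset.mem_filter, Finset.mem_univ, true_and, Fin.val_rev]
  omega

lemma initialVertices_mono : Monotone (initialVertices n) :=
  fun _ _ h _ ha => mem_initialVertices.2 ((mem_initialVertices.1 ha).trans_le h)

lemma finalVertices_mono : Monotone (finalVertices n) := by
  intro k l h a ha
  rw [mem_finalVertices] at ha ⊢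
  omega

lemma card_initialVertices {m : ℕ} (h : m ≤ n) : (initialVertices n m).card = m := by
  rw [initialVertices, Fin.card_filter_val_lt, min_eq_right h]

lemma card_finalVertices {k : ℕ} (h : k ≤ n) : (finalVertices n k).card = k := by
  refine (Finset.card_nbij' Fin.rev Fin.rev ?_ ?_ ?_ ?_).trans (card_initialVertices h) <;>
    intro a <;> simp [finalVertices, initialVertices]
  omega

lemma orthogonal_initialVertices_finalVertices {m k : ℕ} (h : 0 < m → 0 < k → m + k < n)
    {a b : Fin n} (ha : a ∈ initialVertices n m) (hb : b ∈ finalVertices n k) :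
    a ≠ b ∧ ¬ PathAdj a b := by
  rw [mem_initialVertices] at ha
  rw [mem_finalVertices] at hb
  have := h (by omega) (by omega)
  refine ⟨fun hab => ?_, fun hab => ?_⟩
  · subst hab
    omega
  · unfold PathAdj at hab
    omega

end Segments

lemma List.count_take_add_one {α : Type*} [BEq α] (l : List α) {i : ℕ} (hi : i < l.length)
    (a : α) : (l.take (i + 1)).count a = (l.take i).count a + if l[i] == a then 1 else 0 := by
  rw [List.take_succ_eq_append_getElem hi, List.count_append, List.count_singleton]

namespace IsExtDyck

variable {n : ℕ} {w : List Bool}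

lemma count_eq (hw : IsExtDyck n w) (b : Bool) : w.count b = n := by
  cases b
  exacts [hw.2.1, hw.2.2.1]

lemma count_take_le (hw : IsExtDyck n w) (i : ℕ) (b : Bool) : (w.take i).count b ≤ n :=
  hw.count_eq b ▸ (w.take_sublist i).count_le b

lemma count_take_two_mul (hw : IsExtDyck n w) (b : Bool) : (w.take (2 * n)).count b = n := by
  rw [← hw.1, List.take_length, hw.count_eq]

lemma count_take_add_one_getD (hw : IsExtDyck n w) {i : ℕ} (hi : i < 2 * n) (b : Bool) :
    (w.take (i + 1)).count b = (w.take i).count b + if w.getD i false = b then 1 else 0 := by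
  have hi' : i < w.length := hw.1 ▸ hi
  simp [w.count_take_add_one hi', List.getD_eq_getElem?_getD, List.getElem?_eq_getElem hi']

lemma sub_count_take_false_add_count_take_true_lt (hw : IsExtDyck n w) {i : ℕ} (hi : i ≤ 2 * n)
    (hzeros : 0 < n - (w.take i).count false) (hones : 0 < (w.take i).count true) :
    n - (w.take i).count false + (w.take i).count true < n := by
  have hle := hw.count_take_le i false
  obtain rfl | hpos := i.eq_zero_or_pos
  · simp at hones
  obtain rfl | hlt := hi.eq_or_lt
  · rw [hw.count_take_two_mul] at hzeros
    omega
  have := hw.2.2.2 i hpos hlt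
  omega

end IsExtDyck

theorem stmt18_general (n : ℕ) (w : List Bool) (hw : IsExtDyck n w) :
    ∃ D1 D2 : ℕ → Finset (Fin n),
      D1 0 = Finset.univ ∧ D2 0 = ∅ ∧
      D1 (2 * n) = ∅ ∧ D2 (2 * n) = Finset.univ ∧
      (∀ i ≤ 2 * n, ∀ a ∈ D1 i, ∀ b ∈ D2 i, a ≠ b ∧ ¬ PathAdj a b) ∧
      (∀ i < 2 * n,
        (w.getD i false = false → D1 (i + 1) ⊆ D1 i ∧
          (D1 (i + 1)).card + 1 = (D1 i).card ∧ D2 (i + 1) = D2 i) ∧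
        (w.getD i false = true → D2 i ⊆ D2 (i + 1) ∧
          (D2 i).card + 1 = (D2 (i + 1)).card ∧ D1 (i + 1) = D1 i)) := by
  refine ⟨fun i => initialVertices n (n - (w.take i).count false),
    fun i => finalVertices n ((w.take i).count true), ?_, ?_, ?_, ?_, ?_, ?_⟩
  · ext; simp
  · ext; simp
  · ext; simp [hw.count_take_two_mul]
  · ext; simp [hw.count_take_two_mul]
  · intro i hi a ha b hb
    exact orthogonal_initialVertices_finalVertices
      (hw.sub_count_take_false_add_count_take_true_lt hi) ha hb
  · intro i hi
    have hzeros := hw.count_take_add_one_getD hi false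
    have hones := hw.count_take_add_one_getD hi true
    have hzeros_le := hw.count_take_le (i + 1) false
    have hones_le := hw.count_take_le (i + 1) true
    refine ⟨fun h => ?_, fun h => ?_⟩
    · simp only [h, ↓reduceIte, Bool.false_eq_true, add_zero] at hzeros hones
      refine ⟨initialVertices_mono (by omega), ?_, by simp only [hones]⟩
      rw [card_initialVertices (by omega), card_initialVertices (by omega)]
      omega
    · simp only [h, ↓reduceIte, Bool.true_eq_false, add_zero] at hzeros hones
      refine ⟨finalVertices_mono (by omega), ?_, by simp only [hzeros]⟩
      rw [card_finalVertices (by omega), card_finalVertices (by omega)]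
      omega

/-- For the path graph on `n` vertices (type `Aₙ` diagram) and every
extended Dyck word `ε₀⋯ε_{2n-1}`, there is a chain of pairs `(D1 i, D2 i)` of
mutually non-adjacent disjoint vertex subsets, starting at `(Δ, ∅)` and ending at
`(∅, Δ)`, where at step `i` the set `D1` loses exactly one element if `εᵢ = 0`
and `D2` gains exactly one element if `εᵢ = 1`. -/
theorem stmt18 (n : ℕ) (hn : 1 ≤ n) (w : List Bool) (hw : IsExtDyck n w) :
    ∃ D1 D2 : ℕ → Finset (Fin n),
      D1 0 = Finset.univ ∧ D2 0 = ∅ ∧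
      D1 (2 * n) = ∅ ∧ D2 (2 * n) = Finset.univ ∧
      (∀ i ≤ 2 * n, ∀ a ∈ D1 i, ∀ b ∈ D2 i, a ≠ b ∧ ¬ PathAdj a b) ∧
      (∀ i < 2 * n,
        (w.getD i false = false → D1 (i + 1) ⊆ D1 i ∧
          (D1 (i + 1)).card + 1 = (D1 i).card ∧ D2 (i + 1) = D2 i) ∧
        (w.getD i false = true → D2 i ⊆ D2 (i + 1) ∧
          (D2 i).card + 1 = (D2 (i + 1)).card ∧ D1 (i + 1) = D1 i)) :=
  stmt18_general n w hw
end

section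
/- Fix natural numbers a, b ≥ 0. The linear order ω + ω + [a] + ω* + ω + [b] + ω* + ω* is not order-isomorphic to ω + ω + [a'] + ω* + ω + [b'] + ω* + ω* unless a = a' and b = b'. -/
/-- The linear order `ω + ω + [a] + ω* + ω + [b] + ω* + ω*` (lexicographic ordered sum). -/
abbrev OT (a b : ℕ) :=
  ℕ ⊕ₗ ℕ ⊕ₗ Fin a ⊕ₗ ℕᵒᵈ ⊕ₗ ℕ ⊕ₗ Fin b ⊕ₗ ℕᵒᵈ ⊕ₗ ℕᵒᵈ

/-!
The elements at finite distance from `x` form its class in the finite condensation. In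
`ω + ω + [a] + ω* + ω + [b] + ω* + ω*` the classes are `ω, ω, [a], ω* + ω, [b], ω*, ω*`, so the
only finite ones are `[a]` and `[b]`. Intervals inside a class are finite and intervals between
two classes are infinite, so the elements of `[a]` have at most two infinite gaps below them and
those of `[b]` have three. Both properties are invariant under order isomorphisms, which therefore
restrict to bijections `[a] ≃ [a']` and `[b] ≃ [b']`.
-/

open Set Function Sum

section FiniteCondensation

variable {α β : Type*} [LinearOrder α] [LinearOrder β]

def finCondensation (x : α) : Set α := {y | (uIcc x y).Finite}

def HasThreeInfiniteGapsBelow (x : α) : Prop :=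
  ∃ y₁ y₂ y₃, y₁ < y₂ ∧ y₂ < y₃ ∧ y₃ < x ∧
    (Ioo y₁ y₂).Infinite ∧ (Ioo y₂ y₃).Infinite ∧ (Ioo y₃ x).Infinite

lemma mem_finCondensation_iff_of_le {x y : α} (h : x ≤ y) :
    y ∈ finCondensation x ↔ (Icc x y).Finite := by
  rw [finCondensation, mem_ofPred_eq, uIcc_of_le h]

lemma mem_finCondensation_iff_of_ge {x y : α} (h : y ≤ x) :
    y ∈ finCondensation x ↔ (Icc y x).Finite := by
  rw [finCondensation, mem_ofPred_eq, uIcc_of_ge h]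

namespace OrderIso

variable (f : α ≃o β)

lemma image_uIcc (x y : α) : f '' uIcc x y = uIcc (f x) (f y) := by
  rcases le_total x y with h | h
  · rw [uIcc_of_le h, uIcc_of_le (f.monotone h), f.image_Icc]
  · rw [uIcc_of_ge h, uIcc_of_ge (f.monotone h), f.image_Icc]

lemma finite_uIcc_iff (x y : α) : (uIcc (f x) (f y)).Finite ↔ (uIcc x y).Finite := by
  rw [← f.image_uIcc, finite_image_iff f.injective.injOn]

lemma infinite_Ioo_iff (x y : α) : (Ioo (f x) (f y)).Infinite ↔ (Ioo x y).Infinite := by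
  rw [← f.image_Ioo, infinite_image_iff f.injective.injOn]

lemma image_finCondensation (x : α) : f '' finCondensation x = finCondensation (f x) := by
  ext z
  obtain ⟨y, rfl⟩ := f.surjective z
  simp only [finCondensation, f.injective.mem_set_image, mem_ofPred_eq, f.finite_uIcc_iff]

lemma finite_finCondensation_iff (x : α) :
    (finCondensation (f x)).Finite ↔ (finCondensation x).Finite := by
  rw [← f.image_finCondensation, finite_image_iff f.injective.injOn]

lemma hasThreeInfiniteGapsBelow_apply {x : α} (h : HasThreeInfiniteGapsBelow x) :
    HasThreeInfiniteGapsBelow (f x) := by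
  obtain ⟨y₁, y₂, y₃, h₁₂, h₂₃, h₃, i₁₂, i₂₃, i₃⟩ := h
  exact ⟨f y₁, f y₂, f y₃, f.lt_iff_lt.2 h₁₂, f.lt_iff_lt.2 h₂₃, f.lt_iff_lt.2 h₃,
    (f.infinite_Ioo_iff _ _).2 i₁₂, (f.infinite_Ioo_iff _ _).2 i₂₃, (f.infinite_Ioo_iff _ _).2 i₃⟩

lemma hasThreeInfiniteGapsBelow_iff (x : α) :
    HasThreeInfiniteGapsBelow (f x) ↔ HasThreeInfiniteGapsBelow x :=
  ⟨fun h ↦ by simpa using f.symm.hasThreeInfiniteGapsBelow_apply h,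
    f.hasThreeInfiniteGapsBelow_apply⟩

end OrderIso

end FiniteCondensation

namespace OT

variable {a b : ℕ}

def ι₁ (n : ℕ) : OT a b := toLex (inl n)
def ι₂ (n : ℕ) : OT a b := toLex (inr (toLex (inl n)))
def ι₃ (i : Fin a) : OT a b := toLex (inr (toLex (inr (toLex (inl i)))))
def ι₄ (n : ℕ) : OT a b :=
  toLex (inr (toLex (inr (toLex (inr (toLex (inl (OrderDual.toDual n))))))))
def ι₅ (n : ℕ) : OT a b :=
  toLex (inr (toLex (inr (toLex (inr (toLex (inr (toLex (inl n)))))))))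
def ι₆ (i : Fin b) : OT a b :=
  toLex (inr (toLex (inr (toLex (inr (toLex (inr (toLex (inr (toLex (inl i)))))))))))
def ι₇ (n : ℕ) : OT a b :=
  toLex (inr (toLex (inr (toLex (inr (toLex (inr (toLex (inr (toLex (inr
    (toLex (inl (OrderDual.toDual n))))))))))))))
def ι₈ (n : ℕ) : OT a b :=
  toLex (inr (toLex (inr (toLex (inr (toLex (inr (toLex (inr (toLex (inr
    (toLex (inr (OrderDual.toDual n))))))))))))))

lemma exists_eq_ι (x : OT a b) :
    (∃ n, x = ι₁ n) ∨ (∃ n, x = ι₂ n) ∨ (∃ i, x = ι₃ i) ∨ (∃ n, x = ι₄ n) ∨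
    (∃ n, x = ι₅ n) ∨ (∃ i, x = ι₆ i) ∨ (∃ n, x = ι₇ n) ∨ (∃ n, x = ι₈ n) := by
  rcases x with n | n | i | n | n | i | n | n
  · exact Or.inl ⟨n, rfl⟩
  · exact Or.inr <| Or.inl ⟨n, rfl⟩
  · exact Or.inr <| Or.inr <| Or.inl ⟨i, rfl⟩
  · exact Or.inr <| Or.inr <| Or.inr <| Or.inl ⟨OrderDual.ofDual n, rfl⟩
  · exact Or.inr <| Or.inr <| Or.inr <| Or.inr <| Or.inl ⟨n, rfl⟩
  · exact Or.inr <| Or.inr <| Or.inr <| Or.inr <| Or.inr <| Or.inl ⟨i, rfl⟩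
  · exact Or.inr <| Or.inr <| Or.inr <| Or.inr <| Or.inr <| Or.inr <| Or.inl
      ⟨OrderDual.ofDual n, rfl⟩
  · exact Or.inr <| Or.inr <| Or.inr <| Or.inr <| Or.inr <| Or.inr <| Or.inr
      ⟨OrderDual.ofDual n, rfl⟩

/-- Index of the condensation class of an element; the summands `ω*` and `ω` in the middle
form the single class `ω* + ω ≅ ℤ`, of index `3`. -/
def block : OT a b → ℕ
  | inl _ => 0
  | inr (inl _) => 1
  | inr (inr (inl _)) => 2
  | inr (inr (inr (inl _))) => 3
  | inr (inr (inr (inr (inl _)))) => 3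
  | inr (inr (inr (inr (inr (inl _))))) => 4
  | inr (inr (inr (inr (inr (inr (inl _)))))) => 5
  | inr (inr (inr (inr (inr (inr (inr _)))))) => 6

/-- Position of an element inside its condensation class; the `ω*` summands get non-positive
positions, so that `ω* + ω` is numbered by `ℤ`. -/
def pos : OT a b → ℤ
  | inl n => n
  | inr (inl n) => n
  | inr (inr (inl i)) => (i : ℕ)
  | inr (inr (inr (inl n))) => -((OrderDual.ofDual n : ℕ) + 1)
  | inr (inr (inr (inr (inl n)))) => n
  | inr (inr (inr (inr (inr (inl i))))) => (i : ℕ)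
  | inr (inr (inr (inr (inr (inr (inl n)))))) => -(OrderDual.ofDual n : ℕ)
  | inr (inr (inr (inr (inr (inr (inr n)))))) => -(OrderDual.ofDual n : ℕ)

@[simp] lemma block_ι₁ (n : ℕ) : block (ι₁ (a := a) (b := b) n) = 0 := rfl
@[simp] lemma block_ι₂ (n : ℕ) : block (ι₂ (a := a) (b := b) n) = 1 := rfl
@[simp] lemma block_ι₃ (i : Fin a) : block (ι₃ (b := b) i) = 2 := rfl
@[simp] lemma block_ι₄ (n : ℕ) : block (ι₄ (a := a) (b := b) n) = 3 := rfl
@[simp] lemma block_ι₅ (n : ℕ) : block (ι₅ (a := a) (b := b) n) = 3 := rfl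
@[simp] lemma block_ι₆ (i : Fin b) : block (ι₆ (a := a) i) = 4 := rfl
@[simp] lemma block_ι₇ (n : ℕ) : block (ι₇ (a := a) (b := b) n) = 5 := rfl
@[simp] lemma block_ι₈ (n : ℕ) : block (ι₈ (a := a) (b := b) n) = 6 := rfl

@[simp] lemma pos_ι₁ (n : ℕ) : pos (ι₁ (a := a) (b := b) n) = n := rfl
@[simp] lemma pos_ι₂ (n : ℕ) : pos (ι₂ (a := a) (b := b) n) = n := rfl
@[simp] lemma pos_ι₃ (i : Fin a) : pos (ι₃ (b := b) i) = (i : ℕ) := rfl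
@[simp] lemma pos_ι₄ (n : ℕ) : pos (ι₄ (a := a) (b := b) n) = -(n + 1) := rfl
@[simp] lemma pos_ι₅ (n : ℕ) : pos (ι₅ (a := a) (b := b) n) = n := rfl
@[simp] lemma pos_ι₆ (i : Fin b) : pos (ι₆ (a := a) i) = (i : ℕ) := rfl
@[simp] lemma pos_ι₇ (n : ℕ) : pos (ι₇ (a := a) (b := b) n) = -n := rfl
@[simp] lemma pos_ι₈ (n : ℕ) : pos (ι₈ (a := a) (b := b) n) = -n := rfl

lemma lt_iff_block_pos (x y : OT a b) :
    x < y ↔ block x < block y ∨ (block x = block y ∧ pos x < pos y) := by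
  rcases exists_eq_ι x with ⟨n, rfl⟩ | ⟨n, rfl⟩ | ⟨i, rfl⟩ | ⟨n, rfl⟩ | ⟨n, rfl⟩ | ⟨i, rfl⟩ |
      ⟨n, rfl⟩ | ⟨n, rfl⟩ <;>
    rcases exists_eq_ι y with ⟨m, rfl⟩ | ⟨m, rfl⟩ | ⟨j, rfl⟩ | ⟨m, rfl⟩ | ⟨m, rfl⟩ | ⟨j, rfl⟩ |
      ⟨m, rfl⟩ | ⟨m, rfl⟩ <;>
    simp only [block_ι₁, block_ι₂, block_ι₃, block_ι₄, block_ι₅, block_ι₆, block_ι₇, block_ι₈,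
      pos_ι₁, pos_ι₂, pos_ι₃, pos_ι₄, pos_ι₅, pos_ι₆, pos_ι₇, pos_ι₈] <;>
    simp [ι₁, ι₂, ι₃, ι₄, ι₅, ι₆, ι₇, ι₈, Sum.Lex.toLex_lt_toLex] <;>
    omega

lemma eq_of_block_eq_of_pos_eq {x y : OT a b} (hb : block x = block y) (hp : pos x = pos y) :
    x = y :=
  le_antisymm (not_lt.1 fun h ↦ by rw [lt_iff_block_pos] at h; omega)
    (not_lt.1 fun h ↦ by rw [lt_iff_block_pos] at h; omega)

lemma block_le_six (x : OT a b) : block x ≤ 6 := by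
  rcases x with n | n | i | n | n | i | n | n <;> simp [block]

lemma block_mono : Monotone (block : OT a b → ℕ) := fun x y h ↦ by
  rcases h.lt_or_eq with h | rfl
  · rw [lt_iff_block_pos] at h; omega
  · rfl

lemma finite_Icc_of_block_eq {x y : OT a b} (h : block x = block y) : (Icc x y).Finite := by
  refine Finite.of_finite_image ((finite_Icc (pos x) (pos y)).subset ?_) fun z hz w hw hzw ↦
    eq_of_block_eq_of_pos_eq ?_ hzw
  · rintro _ ⟨z, ⟨hxz, hzy⟩, rfl⟩
    have := block_mono hxz; have := block_mono hzy
    rw [← not_lt, lt_iff_block_pos] at hxz hzy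
    exact ⟨by omega, by omega⟩
  · have := block_mono hz.1; have := block_mono hz.2
    have := block_mono hw.1; have := block_mono hw.2
    omega

lemma mem_finCondensation_of_block_eq {x y : OT a b} (h : block x = block y) :
    y ∈ finCondensation x := by
  rcases le_total x y with hxy | hxy
  · exact (mem_finCondensation_iff_of_le hxy).2 (finite_Icc_of_block_eq h)
  · exact (mem_finCondensation_iff_of_ge hxy).2 (finite_Icc_of_block_eq h.symm)

lemma infinite_of_injective_pos {s : Set (OT a b)} (g : ℕ → OT a b)
    (hg : ∀ m n, pos (g m) = pos (g n) → m = n) (hs : ∀ n, g n ∈ s) : s.Infinite :=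
  infinite_of_injective_forall_mem (Injective.of_comp (f := pos) fun m n ↦ hg m n) hs

lemma infinite_Ioo_of_block_lt {x y : OT a b} (h : block x < block y) : (Ioo x y).Infinite := by
  have := block_le_six y
  -- Either the class of `x` is unbounded above, and a tail of it lies in `Ioo x y`, or the next
  -- class is unbounded below, and a tail of it below `y` (or below all of it) does.
  rcases exists_eq_ι x with ⟨p, rfl⟩ | ⟨p, rfl⟩ | ⟨i, rfl⟩ | ⟨p, rfl⟩ | ⟨p, rfl⟩ | ⟨i, rfl⟩ |
      ⟨p, rfl⟩ | ⟨p, rfl⟩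
  · exact infinite_of_injective_pos (fun n ↦ ι₁ (p + 1 + n)) (by simp) fun n ↦ by
      simp [lt_iff_block_pos] at h ⊢; omega
  · exact infinite_of_injective_pos (fun n ↦ ι₂ (p + 1 + n)) (by simp) fun n ↦ by
      simp [lt_iff_block_pos] at h ⊢; omega
  · exact infinite_of_injective_pos (fun n ↦ ι₄ ((-pos y).toNat + n)) (by simp) fun n ↦ by
      simp [lt_iff_block_pos] at h ⊢; omega
  · exact infinite_of_injective_pos ι₅ (by simp) fun n ↦ by
      simp [lt_iff_block_pos] at h ⊢; omega
  · exact infinite_of_injective_pos (fun n ↦ ι₅ (p + 1 + n)) (by simp) fun n ↦ by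
      simp [lt_iff_block_pos] at h ⊢; omega
  · exact infinite_of_injective_pos (fun n ↦ ι₇ ((-pos y).toNat + 1 + n)) (by simp) fun n ↦ by
      simp [lt_iff_block_pos] at h ⊢; omega
  · exact infinite_of_injective_pos (fun n ↦ ι₈ ((-pos y).toNat + 1 + n)) (by simp) fun n ↦ by
      simp [lt_iff_block_pos] at h ⊢; omega
  · simp at h; omega

lemma finCondensation_eq (x : OT a b) : finCondensation x = {y | block y = block x} := by
  ext y
  refine ⟨fun hy ↦ ?_, fun hy ↦ mem_finCondensation_of_block_eq hy.symm⟩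
  by_contra hne
  rcases lt_or_gt_of_ne hne with h | h
  · have := (mem_finCondensation_iff_of_ge (block_mono.reflect_lt h).le).1 hy
    exact infinite_Ioo_of_block_lt h (this.subset Ioo_subset_Icc_self)
  · have := (mem_finCondensation_iff_of_le (block_mono.reflect_lt h).le).1 hy
    exact infinite_Ioo_of_block_lt h (this.subset Ioo_subset_Icc_self)

lemma ι₃_injective : Injective (ι₃ (a := a) (b := b)) :=
  fun i j h ↦ Fin.ext (by simpa using congrArg pos h)

lemma ι₆_injective : Injective (ι₆ (a := a) (b := b)) :=
  fun i j h ↦ Fin.ext (by simpa using congrArg pos h)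

lemma range_ι₃ : range (ι₃ (a := a) (b := b)) = {x | block x = 2} := by
  refine (range_subset_iff.2 block_ι₃).antisymm fun x hx ↦ ?_
  rcases exists_eq_ι x with ⟨p, rfl⟩ | ⟨p, rfl⟩ | ⟨i, rfl⟩ | ⟨p, rfl⟩ | ⟨p, rfl⟩ | ⟨i, rfl⟩ |
      ⟨p, rfl⟩ | ⟨p, rfl⟩ <;> simp_all

lemma range_ι₆ : range (ι₆ (a := a) (b := b)) = {x | block x = 4} := by
  refine (range_subset_iff.2 block_ι₆).antisymm fun x hx ↦ ?_
  rcases exists_eq_ι x with ⟨p, rfl⟩ | ⟨p, rfl⟩ | ⟨i, rfl⟩ | ⟨p, rfl⟩ | ⟨p, rfl⟩ | ⟨i, rfl⟩ |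
      ⟨p, rfl⟩ | ⟨p, rfl⟩ <;> simp_all

lemma finite_finCondensation_iff (x : OT a b) :
    (finCondensation x).Finite ↔ block x = 2 ∨ block x = 4 := by
  rw [finCondensation_eq]
  refine ⟨fun hfin ↦ ?_, ?_⟩
  · rcases exists_eq_ι x with ⟨p, rfl⟩ | ⟨p, rfl⟩ | ⟨i, rfl⟩ | ⟨p, rfl⟩ | ⟨p, rfl⟩ | ⟨i, rfl⟩ |
        ⟨p, rfl⟩ | ⟨p, rfl⟩
    · exact (infinite_of_injective_pos ι₁ (by simp) (by simp) hfin).elim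
    · exact (infinite_of_injective_pos ι₂ (by simp) (by simp) hfin).elim
    · simp
    · exact (infinite_of_injective_pos ι₅ (by simp) (by simp) hfin).elim
    · exact (infinite_of_injective_pos ι₅ (by simp) (by simp) hfin).elim
    · simp
    · exact (infinite_of_injective_pos ι₇ (by simp) (by simp) hfin).elim
    · exact (infinite_of_injective_pos ι₈ (by simp) (by simp) hfin).elim
  · rintro (h | h)
    · rw [h, ← range_ι₃]; exact finite_range _
    · rw [h, ← range_ι₆]; exact finite_range _

lemma block_lt_of_infinite_Ioo {x y : OT a b} (hxy : x < y) (h : (Ioo x y).Infinite) :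
    block x < block y :=
  (block_mono hxy.le).lt_of_ne fun hb ↦ h ((finite_Icc_of_block_eq hb).subset Ioo_subset_Icc_self)

lemma not_hasThreeInfiniteGapsBelow_of_block_le_two {x : OT a b} (hx : block x ≤ 2) :
    ¬ HasThreeInfiniteGapsBelow x := by
  rintro ⟨y₁, y₂, y₃, h₁₂, h₂₃, h₃, i₁₂, i₂₃, i₃⟩
  have := block_lt_of_infinite_Ioo h₁₂ i₁₂
  have := block_lt_of_infinite_Ioo h₂₃ i₂₃
  have := block_lt_of_infinite_Ioo h₃ i₃
  omega

lemma hasThreeInfiniteGapsBelow_of_four_le_block {x : OT a b} (hx : 4 ≤ block x) :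
    HasThreeInfiniteGapsBelow x :=
  have h₁₂ : block (ι₁ 0 : OT a b) < block (ι₂ 0 : OT a b) := by simp
  have h₂₃ : block (ι₂ 0 : OT a b) < block (ι₄ 0 : OT a b) := by simp
  have h₃ : block (ι₄ 0 : OT a b) < block x := by simp; omega
  ⟨ι₁ 0, ι₂ 0, ι₄ 0, block_mono.reflect_lt h₁₂, block_mono.reflect_lt h₂₃,
    block_mono.reflect_lt h₃, infinite_Ioo_of_block_lt h₁₂, infinite_Ioo_of_block_lt h₂₃,
    infinite_Ioo_of_block_lt h₃⟩

lemma setOf_finite_and_not_hasThreeInfiniteGapsBelow :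
    {x : OT a b | (finCondensation x).Finite ∧ ¬ HasThreeInfiniteGapsBelow x} = range ι₃ := by
  ext x
  rw [range_ι₃, mem_ofPred_eq, mem_ofPred_eq, finite_finCondensation_iff]
  refine ⟨fun ⟨hx, hgaps⟩ ↦
    hx.resolve_right fun h ↦ hgaps (hasThreeInfiniteGapsBelow_of_four_le_block h.ge),
    fun hx ↦ ⟨Or.inl hx, not_hasThreeInfiniteGapsBelow_of_block_le_two hx.le⟩⟩

lemma setOf_finite_and_hasThreeInfiniteGapsBelow :
    {x : OT a b | (finCondensation x).Finite ∧ HasThreeInfiniteGapsBelow x} = range ι₆ := by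
  ext x
  rw [range_ι₆, mem_ofPred_eq, mem_ofPred_eq, finite_finCondensation_iff]
  refine ⟨fun ⟨hx, hgaps⟩ ↦
    hx.resolve_left fun h ↦ not_hasThreeInfiniteGapsBelow_of_block_le_two h.le hgaps,
    fun hx ↦ ⟨Or.inr hx, hasThreeInfiniteGapsBelow_of_four_le_block hx.ge⟩⟩

lemma natCard_finite_and_not_hasThreeInfiniteGapsBelow (a b : ℕ) :
    Nat.card {x : OT a b // (finCondensation x).Finite ∧ ¬ HasThreeInfiniteGapsBelow x} = a := by
  rw [← coe_ofPred, setOf_finite_and_not_hasThreeInfiniteGapsBelow,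
    Nat.card_range_of_injective ι₃_injective, Nat.card_fin]

lemma natCard_finite_and_hasThreeInfiniteGapsBelow (a b : ℕ) :
    Nat.card {x : OT a b // (finCondensation x).Finite ∧ HasThreeInfiniteGapsBelow x} = b := by
  rw [← coe_ofPred, setOf_finite_and_hasThreeInfiniteGapsBelow,
    Nat.card_range_of_injective ι₆_injective, Nat.card_fin]

end OT

/-- `ω + ω + [a] + ω* + ω + [b] + ω* + ω*` is order-isomorphic to
`ω + ω + [a'] + ω* + ω + [b'] + ω* + ω*` only if `a = a'` and `b = b'`. -/
theorem stmt19 (a b a' b' : ℕ) (h : Nonempty (OT a b ≃o OT a' b')) :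
    a = a' ∧ b = b' := by
  obtain ⟨f⟩ := h
  have hf (x : OT a b) :
      ((finCondensation (f x)).Finite ↔ (finCondensation x).Finite) ∧
        (HasThreeInfiniteGapsBelow (f x) ↔ HasThreeInfiniteGapsBelow x) :=
    ⟨f.finite_finCondensation_iff x, f.hasThreeInfiniteGapsBelow_iff x⟩
  constructor
  · rw [← OT.natCard_finite_and_not_hasThreeInfiniteGapsBelow a b,
      ← OT.natCard_finite_and_not_hasThreeInfiniteGapsBelow a' b']
    exact Nat.card_congr (f.toEquiv.subtypeEquiv fun x ↦ by simp [hf])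
  · rw [← OT.natCard_finite_and_hasThreeInfiniteGapsBelow a b,
      ← OT.natCard_finite_and_hasThreeInfiniteGapsBelow a' b']
    exact Nat.card_congr (f.toEquiv.subtypeEquiv fun x ↦ by simp [hf])
end
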